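/- arXiv:2004.06710 — 3 statements merged into one kernel-verified Lean document; each statement's English description precedes it below -/
import Mathlib

section
/- If G_0, G_1, … and H_0 ⊆ H_1 ⊆ … are sequences of graphs with H_n a subgraph of G_n for every n, and for every n there is a minor-map φ_n : G_n ≽ G_{n+1} that restricts to the identity on H_n (i.e., every vertex x of H_n lies in the domain of φ_n and φ_n(x) = x), then the union ∪_{n∈ℕ} H_n is a minor of G_0. -/
open SimpleGraph

universe u v

/-! ### Basic connectivity notions -/

/-- The edge set `F` separates `a` from `b` in `G`: every `a`–`b` walk uses an edge of `F`. -/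
def EdgeSeparates {V : Type u} (G : SimpleGraph V) (F : Set (Sym2 V)) (a b : V) : Prop :=
  ∀ p : G.Walk a b, ∃ e ∈ p.edges, e ∈ F

/-- `a` and `b` are finitely separable in `G`: some finite edge set separates them. -/
def FinSep {V : Type u} (G : SimpleGraph V) (a b : V) : Prop :=
  ∃ F : Set (Sym2 V), F.Finite ∧ EdgeSeparates G F a b

/-- `G` is infinitely edge-connected: it has at least two vertices and no finite set of
edges separates any two distinct vertices. -/
def InfEdgeConnected {V : Type u} (G : SimpleGraph V) : Prop :=
  Nontrivial V ∧ ∀ a b : V, a ≠ b → ¬ FinSep G a b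

/-- The vertex set `S` separates `a` from `b`: `a, b ∉ S` and every `a`–`b` walk meets `S`. -/
def VSeparates {V : Type u} (G : SimpleGraph V) (S : Set V) (a b : V) : Prop :=
  a ∉ S ∧ b ∉ S ∧ ∀ p : G.Walk a b, ∃ z ∈ p.support, z ∈ S

/-! ### Minors -/

/-- `br` is a minor model of `H` in `G`: the branch sets `br w` are nonempty, pairwise
disjoint, connected in `G`, and edges of `H` are witnessed by `G`-edges between branch sets. -/
def IsMinorModel {V : Type u} {W : Type v} (G : SimpleGraph V) (H : SimpleGraph W)
    (br : W → Set V) : Prop :=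
  (∀ w, (br w).Nonempty) ∧ (∀ w, (G.induce (br w)).Connected) ∧
    (∀ w w' : W, w ≠ w' → Disjoint (br w) (br w')) ∧
    (∀ w w' : W, H.Adj w w' → ∃ a ∈ br w, ∃ b ∈ br w', G.Adj a b)

/-- `H` is a minor of `G`. -/
def HasMinor {V : Type u} {W : Type v} (G : SimpleGraph V) (H : SimpleGraph W) : Prop :=
  ∃ br : W → Set V, IsMinorModel G H br

/-- `G` and `H` are minor-equivalent: each is a minor of the other. -/
def MinorEquiv {V : Type u} {W : Type v} (G : SimpleGraph V) (H : SimpleGraph W) : Prop :=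
  HasMinor G H ∧ HasMinor H G

/-- `H` is a topological minor of `G`: there are branch vertices (given by the injection `f`)
and internally disjoint paths in `G` joining them, one for each edge of `H`, together forming
a subdivision of `H` inside `G`. -/
def IsTopMinor {V : Type u} {W : Type v} (G : SimpleGraph V) (H : SimpleGraph W) : Prop :=
  ∃ f : W → V, Function.Injective f ∧
    ∃ p : ∀ ⦃x y : W⦄, H.Adj x y → G.Walk (f x) (f y),
      (∀ ⦃x y : W⦄ (h : H.Adj x y), (p h).IsPath) ∧
      (∀ ⦃x y : W⦄ (h : H.Adj x y), ∀ w : W, f w ∈ (p h).support → w = x ∨ w = y) ∧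
      (∀ ⦃x y x' y' : W⦄ (h : H.Adj x y) (h' : H.Adj x' y'), s(x, y) ≠ s(x', y') →
        ∀ z : V, z ∈ (p h).support → z ∈ (p h').support →
          (z = f x ∨ z = f y) ∧ (z = f x' ∨ z = f y'))

/-! ### The Farey graph, the halved Farey graph, `T_ℵ₀ * t` and the binary tree -/

/-- The Farey graph, on vertex set `ℚ ∪ {∞}` (with `none` playing the role of `∞ = 1/0`):
two rationals `a/b` and `c/d` in lowest terms are adjacent iff `ad - cb = ±1`. -/
def fareyGraph : SimpleGraph (Option ℚ) where
  Adj x y :=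
    match x, y with
    | some q, some r => (q.num * (r.den : ℤ) - r.num * (q.den : ℤ)).natAbs = 1
    | some q, none => q.den = 1
    | none, some r => r.den = 1
    | none, none => False
  symm := by
    constructor
    rintro (_ | q) (_ | r) h
    · exact h
    · exact h
    · exact h
    · simp only at h ⊢
      rw [← neg_sub, Int.natAbs_neg] at h
      exact h
  loopless := by
    constructor
    rintro (_ | q) h
    · exact h
    · simp at h

/-- The `ℵ₀`-regular tree, realised on finite sequences of naturals, a vertex being
adjacent precisely to its parent and to its infinitely many children. -/
def TAleph0 : SimpleGraph (List ℕ) where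
  Adj x y := (∃ n, x = n :: y) ∨ (∃ n, y = n :: x)
  symm := by
    constructor
    rintro x y (h | h)
    · exact Or.inr h
    · exact Or.inl h
  loopless := by
    constructor
    rintro x (⟨n, h⟩ | ⟨n, h⟩) <;> exact List.cons_ne_self n x h.symm

/-- The graph `T_ℵ₀ * t`: the `ℵ₀`-regular tree together with one additional vertex
(`none`) joined to all of its vertices. -/
def TAleph0Star : SimpleGraph (Option (List ℕ)) where
  Adj x y :=
    match x, y with
    | none, none => False
    | none, some _ => True
    | some _, none => True
    | some a, some b => TAleph0.Adj a b
  symm := by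
    constructor
    rintro (_ | a) (_ | b) h
    · exact h
    · trivial
    · trivial
    · exact TAleph0.symm.symm _ _ h
  loopless := by
    constructor
    rintro (_ | a) h
    · exact h
    · exact TAleph0.loopless.irrefl a h

/-- The infinite binary tree, realised on finite sequences of booleans, a vertex being
adjacent precisely to its parent and to its two children. -/
def binaryTree : SimpleGraph (List Bool) where
  Adj x y := (∃ b, x = b :: y) ∨ (∃ b, y = b :: x)
  symm := by
    constructor
    rintro x y (h | h)
    · exact Or.inr h
    · exact Or.inl h
  loopless := by
    constructor
    rintro x (⟨b, h⟩ | ⟨b, h⟩) <;> exact List.cons_ne_self b x h.symm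

/-- The two original endvertices of the blue edge to which the vertex recursively created
for a binary string was joined when it was created.  The two initial vertices of `F̌₀` are
`Sum.inl true` and `Sum.inl false`; the vertex created for the string `s` is `Sum.inr s`,
its two children being `false :: s` and `true :: s`. -/
def hfEnds : List Bool → (Bool ⊕ List Bool) × (Bool ⊕ List Bool)
  | [] => (Sum.inl true, Sum.inl false)
  | (false :: s) => (Sum.inr s, (hfEnds s).1)
  | (true :: s) => (Sum.inr s, (hfEnds s).2)

/-- The halved Farey graph `F̌ = ⋃ₙ F̌ₙ`. -/
def halvedFareyGraph : SimpleGraph (Bool ⊕ List Bool) where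
  Adj x y := x ≠ y ∧
    ((x = Sum.inl true ∧ y = Sum.inl false) ∨ (y = Sum.inl true ∧ x = Sum.inl false) ∨
      (∃ s, x = Sum.inr s ∧ (y = (hfEnds s).1 ∨ y = (hfEnds s).2)) ∨
      (∃ s, y = Sum.inr s ∧ (x = (hfEnds s).1 ∨ x = (hfEnds s).2)))
  symm := by
    constructor
    rintro x y ⟨hne, h⟩
    refine ⟨hne.symm, ?_⟩
    rcases h with h | h | h | h
    · exact Or.inr (Or.inl h)
    · exact Or.inl h
    · exact Or.inr (Or.inr (Or.inr h))
    · exact Or.inr (Or.inr (Or.inl h))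
  loopless := by constructor; rintro x ⟨hne, -⟩; exact hne rfl

/-! ### Spanning trees, bonds and separations -/

/-- The fundamental cut of the edge `ab` of a spanning tree `T` of `G`: the set of edges
of `G` joining the two components of `T - ab`. -/
def FundCut {V : Type u} (G T : SimpleGraph V) (a b : V) : Set (Sym2 V) :=
  {e | e ∈ G.edgeSet ∧ ∃ x y : V, e = s(x, y) ∧
    (T.deleteEdges {s(a, b)}).Reachable a x ∧ (T.deleteEdges {s(a, b)}).Reachable b y}

/-- `T` is a finitely separating spanning tree of `G`: a spanning tree all of whose
fundamental cuts are finite. -/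
def IsFinSepSpanningTree {V : Type u} (G T : SimpleGraph V) : Prop :=
  T ≤ G ∧ T.IsTree ∧ ∀ a b : V, T.Adj a b → (FundCut G T a b).Finite

/-- The set of edges of `G` between the vertex sets `A` and `B`. -/
def cutEdgesBetween {V : Type u} (G : SimpleGraph V) (A B : Set V) : Set (Sym2 V) :=
  {e | ∃ a ∈ A, ∃ b ∈ B, G.Adj a b ∧ e = s(a, b)}

/-- `(A, B)` is an orientation of an element of `B_ℵ₀(G)`: a bipartition of `V(G)` whose
cut is a finite bond, i.e. is nonempty and finite with both sides connected. -/
def IsFinBondOrientation {V : Type u} (G : SimpleGraph V) (A B : Set V) : Prop :=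
  A ∪ B = Set.univ ∧ Disjoint A B ∧
    (cutEdgesBetween G A B).Nonempty ∧ (cutEdgesBetween G A B).Finite ∧
    (G.induce A).Connected ∧ (G.induce B).Connected

/-! ### The quotient graph `G̃` by finite inseparability -/

/-- The class of all vertices not finitely separable from `x`. -/
def ncls {V : Type u} (G : SimpleGraph V) (x : V) : Set V := {y | ¬ FinSep G x y}

/-- The vertex classes of `G̃`. -/
def ClassOf {V : Type u} (G : SimpleGraph V) : Type u := {X : Set V // ∃ x, X = ncls G x}

/-- The quotient graph `G̃` on the classes of pairwise not finitely separable vertices;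
two distinct classes are adjacent iff `G` has an edge between them. -/
def tildeGraph {V : Type u} (G : SimpleGraph V) : SimpleGraph (ClassOf G) where
  Adj X Y := X ≠ Y ∧ ∃ a ∈ X.1, ∃ b ∈ Y.1, G.Adj a b
  symm := by
    constructor
    rintro X Y ⟨hne, a, ha, b, hb, hab⟩
    exact ⟨hne.symm, b, hb, a, ha, hab.symm⟩
  loopless := by constructor; rintro X ⟨hne, -⟩; exact hne rfl

/-- `C` is (the vertex set of) a connected component of `G - u - v`. -/
def IsCompOf {V : Type u} (G : SimpleGraph V) (u v : V) (C : Set V) : Prop :=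
  u ∉ C ∧ v ∉ C ∧ (G.induce C).Connected ∧
    ∀ x, x ∉ C → x ≠ u → x ≠ v → ∀ c ∈ C, ¬ G.Adj c x

/-! ### Arrows, footballs, muscles and plows -/

/-- `A` is an arrow from `u` to `v`: it arises from `u` and `v` by disjointly adding an
infinitely edge-connected payload `H` (here: everything except `u` and `v`), adding a
single `u`–`H` edge `u h`, and adding infinitely many `v`–`(H - h)` edges. -/
def IsArrow {W : Type u} (A : SimpleGraph W) (u v : W) : Prop :=
  u ≠ v ∧
    ∃ h : W, h ≠ u ∧ h ≠ v ∧
      (∀ w, A.Adj u w ↔ w = h) ∧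
      {w | A.Adj v w}.Infinite ∧
      (∀ w, A.Adj v w → w ≠ u ∧ w ≠ h) ∧
      InfEdgeConnected (A.induce {w | w ≠ u ∧ w ≠ v})

/-- `B` is an arrow barrage from `u` to `v`: a union of countably infinitely many arrows
from `u` to `v` which pairwise meet precisely in `u` and `v`. -/
def IsArrowBarrage {W : Type u} (B : SimpleGraph W) (u v : W) : Prop :=
  u ≠ v ∧ ¬ B.Adj u v ∧
    ∃ P : ℕ → Set W,
      (∀ n, u ∉ P n ∧ v ∉ P n) ∧
      (∀ n m, n ≠ m → Disjoint (P n) (P m)) ∧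
      (∀ w : W, w ≠ u → w ≠ v → ∃ n, w ∈ P n) ∧
      (∀ n m, n ≠ m → ∀ a ∈ P n, ∀ b ∈ P m, ¬ B.Adj a b) ∧
      (∀ n, IsArrow (B.induce (P n ∪ {u, v}))
        ⟨u, by simp⟩ ⟨v, by simp⟩)

/-- `G` contains an arrow barrage minor from `x` to `y`: the branch set of the nock
contains `x` and the branch set of the head contains `y`. -/
def HasArrowBarrageMinorFromTo {V : Type u} (G : SimpleGraph V) (x y : V) : Prop :=
  ∃ (W : Type u) (B : SimpleGraph W) (n h : W) (br : W → Set V),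
    IsArrowBarrage B n h ∧ IsMinorModel G B br ∧ x ∈ br n ∧ y ∈ br h

/-- `F` is a football with endvertices `u` and `v`: `F` is infinitely edge-connected and
so is `F - u - v`. -/
def IsFootball {W : Type u} (F : SimpleGraph W) (u v : W) : Prop :=
  u ≠ v ∧ InfEdgeConnected F ∧ InfEdgeConnected (F.induce {w | w ≠ u ∧ w ≠ v})

/-- `G` contains a football minor connecting `x` and `y`. -/
def HasFootballMinorConnecting {V : Type u} (G : SimpleGraph V) (x y : V) : Prop :=
  ∃ (W : Type u) (F : SimpleGraph W) (u v : W) (br : W → Set V),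
    IsFootball F u v ∧ IsMinorModel G F br ∧
      ((x ∈ br u ∧ y ∈ br v) ∨ (x ∈ br v ∧ y ∈ br u))

/-- `M` is a muscle with endvertices `u` and `v`: it arises from `u` and `v` by disjointly
adding an infinitely edge-connected graph `H` (everything except `u` and `v`) and adding
one `u`–`H` edge `u x` and one `v`–`H` edge `v y` with `x ≠ y`. -/
def IsMuscle {W : Type u} (M : SimpleGraph W) (u v : W) : Prop :=
  u ≠ v ∧
    ∃ x y : W, x ≠ u ∧ x ≠ v ∧ y ≠ u ∧ y ≠ v ∧ x ≠ y ∧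
      (∀ w, M.Adj u w ↔ w = x) ∧ (∀ w, M.Adj v w ↔ w = y) ∧
      InfEdgeConnected (M.induce {w | w ≠ u ∧ w ≠ v})

/-- `B` is a muscle barrage with endvertices `u` and `v`. -/
def IsMuscleBarrage {W : Type u} (B : SimpleGraph W) (u v : W) : Prop :=
  u ≠ v ∧ ¬ B.Adj u v ∧
    ∃ P : ℕ → Set W,
      (∀ n, u ∉ P n ∧ v ∉ P n) ∧
      (∀ n m, n ≠ m → Disjoint (P n) (P m)) ∧
      (∀ w : W, w ≠ u → w ≠ v → ∃ n, w ∈ P n) ∧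
      (∀ n m, n ≠ m → ∀ a ∈ P n, ∀ b ∈ P m, ¬ B.Adj a b) ∧
      (∀ n, IsMuscle (B.induce (P n ∪ {u, v}))
        ⟨u, by simp⟩ ⟨v, by simp⟩)

/-- `G` contains a muscle barrage minor connecting `x` and `y`. -/
def HasMuscleBarrageMinorConnecting {V : Type u} (G : SimpleGraph V) (x y : V) : Prop :=
  ∃ (W : Type u) (B : SimpleGraph W) (u v : W) (br : W → Set V),
    IsMuscleBarrage B u v ∧ IsMinorModel G B br ∧
      ((x ∈ br u ∧ y ∈ br v) ∨ (x ∈ br v ∧ y ∈ br u))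

/-- `P` is a plow with endvertices `u`, `v` and head `h`: the union of two half-plows
(infinitely edge-connected graphs containing the edges `u h` resp. `h v`) meeting
precisely in `h`. -/
def IsPlow {W : Type u} (P : SimpleGraph W) (u v h : W) : Prop :=
  u ≠ v ∧ u ≠ h ∧ v ≠ h ∧
    ∃ S T : Set W, S ∪ T = Set.univ ∧ S ∩ T = {h} ∧ u ∈ S ∧ v ∈ T ∧
      (∀ a b : W, P.Adj a b → (a ∈ S ∧ b ∈ S) ∨ (a ∈ T ∧ b ∈ T)) ∧
      InfEdgeConnected (P.induce S) ∧ InfEdgeConnected (P.induce T) ∧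
      P.Adj u h ∧ P.Adj h v

/-- `G` contains a plow minor connecting `x` and `y`. -/
def HasPlowMinorConnecting {V : Type u} (G : SimpleGraph V) (x y : V) : Prop :=
  ∃ (W : Type u) (P : SimpleGraph W) (u v h : W) (br : W → Set V),
    IsPlow P u v h ∧ IsMinorModel G P br ∧
      ((x ∈ br u ∧ y ∈ br v) ∨ (x ∈ br v ∧ y ∈ br u))

/-! ### Recursive pruning -/

/-- One pruning step: remove from `S` all vertices whose up-closure within `S`
(w.r.t. the tree order `r`) is a chain. -/
def pruneStep {V : Type u} (r : V → V → Prop) (S : Set V) : Set V :=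
  {t | t ∈ S ∧ ¬ IsChain r {s | s ∈ S ∧ r t s}}

/-- The set of vertices still unlabelled at stage `α` of the recursive pruning. -/
noncomputable def unlabelledAt {V : Type u} (r : V → V → Prop) : Ordinal.{u} → Set V :=
  WellFounded.fix Ordinal.lt_wf
    (fun α ih => {t | ∀ β, ∀ hβ : β < α, t ∈ pruneStep r (ih β hβ)})

/-- The tree order `r` is recursively prunable: every vertex eventually gets labelled. -/
def RecursivelyPrunable {V : Type u} (r : V → V → Prop) : Prop :=
  ∃ α : Ordinal.{u}, unlabelledAt r α = ∅

/-- The tree order of the tree `T` rooted in `root`: `x ≤ y` iff `x` lies on the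
(unique) `root`–`y` path of `T`. -/
def treeLE {V : Type u} (T : SimpleGraph V) (root : V) (x y : V) : Prop :=
  ∀ p : T.Walk root y, p.IsPath → x ∈ p.support

/-! ### Contracting a vertex set -/

/-- The graph `G[W]/X` obtained from the subgraph of `G` induced on `W` by contracting
the vertex set `X` to a single new vertex (`none`); the contracted vertex is adjacent to
precisely those vertices of `W \ X` that send an edge to `X` in `G[W]`. -/
def contractIn {V : Type u} (G : SimpleGraph V) (W X : Set V) :
    SimpleGraph (Option ↥(W \ X)) where
  Adj a b :=
    match a, b with
    | some a, some b => G.Adj a.1 b.1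
    | some a, none => ∃ x ∈ W ∩ X, G.Adj a.1 x
    | none, some b => ∃ x ∈ W ∩ X, G.Adj x b.1
    | none, none => False
  symm := by
    constructor
    rintro (_ | a) (_ | b) h
    · exact h
    · obtain ⟨x, hx, hadj⟩ := h
      exact ⟨x, hx, hadj.symm⟩
    · obtain ⟨x, hx, hadj⟩ := h
      exact ⟨x, hx, hadj.symm⟩
    · exact h.symm
  loopless := by
    constructor
    rintro (_ | a) h
    · exact h
    · exact G.loopless.irrefl _ h

/-! ### Abstract graphs with vertex sets (as subgraphs of the complete ambient graph) -/

/-- A minor model of the abstract graph `H` in the abstract graph `G` (both given as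
subgraphs of the complete graph on the ambient vertex type `U`). -/
def AbsMinorModel {U : Type u} (G H : (⊤ : SimpleGraph U).Subgraph) (br : U → Set U) : Prop :=
  (∀ h ∈ H.verts, br h ⊆ G.verts) ∧
    (∀ h ∈ H.verts, (G.induce (br h)).Connected) ∧
    (∀ h ∈ H.verts, ∀ h' ∈ H.verts, h ≠ h' → Disjoint (br h) (br h')) ∧
    (∀ h h' : U, H.Adj h h' → ∃ a ∈ br h, ∃ b ∈ br h', G.Adj a b)

/-- A minor-map `φ = (D, f) : G ≽ H`: `D ⊆ V(G)`, `f` maps `D` onto `V(H)`, and the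
fibres of `f` over the vertices of `H` form the branch sets of a minor model of `H` in `G`. -/
def AbsMinorMap {U : Type u} (G H : (⊤ : SimpleGraph U).Subgraph) (D : Set U) (f : U → U) :
    Prop :=
  D ⊆ G.verts ∧ (∀ x ∈ D, f x ∈ H.verts) ∧ (∀ h ∈ H.verts, ∃ x ∈ D, f x = h) ∧
    AbsMinorModel G H (fun h => {x | x ∈ D ∧ f x = h})


namespace L512

variable {U : Type u}

/-- From pointwise `ReflTransGen` of subgraph adjacency to connectivity. -/
lemma connected_of_rtg (K : (⊤ : SimpleGraph U).Subgraph)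
    (hne : K.verts.Nonempty)
    (h : ∀ a ∈ K.verts, ∀ b ∈ K.verts, Relation.ReflTransGen K.Adj a b) :
    K.Connected := by
  rw [K.connected_iff]
  refine ⟨⟨?_⟩, hne⟩
  rintro ⟨a, ha⟩ ⟨b, hb⟩
  have key : ∀ a b : U, Relation.ReflTransGen K.Adj a b →
      ∀ (ha : a ∈ K.verts) (hb : b ∈ K.verts), K.coe.Reachable ⟨a, ha⟩ ⟨b, hb⟩ := by
    intro a b hr
    induction hr using Relation.ReflTransGen.head_induction_on with
    | refl => intro _ _; rfl
    | head hadj _ ih =>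
      intro ha hb
      have hc := K.edge_vert hadj.symm
      exact (SimpleGraph.Adj.reachable (by exact hadj)).trans (ih hc hb)
  exact key a b (h a ha b hb) ha hb

lemma rtg_of_connected {K : (⊤ : SimpleGraph U).Subgraph} (hc : K.Connected)
    {a b : U} (ha : a ∈ K.verts) (hb : b ∈ K.verts) :
    Relation.ReflTransGen K.Adj a b := by
  have hr : K.coe.Reachable ⟨a, ha⟩ ⟨b, hb⟩ := hc.coe ⟨a, ha⟩ ⟨b, hb⟩
  exact Relation.ReflTransGen.lift (r := K.coe.Adj) (p := K.Adj)
    (Subtype.val) (fun x y hxy => hxy) _ _ ((SimpleGraph.reachable_iff_reflTransGen _ _).mp hr)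

/-- Iterated pullback of a vertex set along the minor-maps. -/
def pullN (D : ℕ → Set U) (f : ℕ → U → U) : ℕ → Set U → Set U
  | 0, S => S
  | (n+1), S => pullN D f n {x | x ∈ D n ∧ f n x ∈ S}

lemma pullN_mono (D : ℕ → Set U) (f : ℕ → U → U) :
    ∀ n {S T : Set U}, S ⊆ T → pullN D f n S ⊆ pullN D f n T
  | 0, _, _, h => h
  | (n+1), S, T, h =>
    pullN_mono D f n (fun x hx => ⟨hx.1, h hx.2⟩)

lemma pullN_empty (D : ℕ → Set U) (f : ℕ → U → U) :
    ∀ n, pullN D f n (∅ : Set U) = ∅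
  | 0 => rfl
  | (n+1) => by
    have : {x | x ∈ D n ∧ f n x ∈ (∅ : Set U)} = (∅ : Set U) := by
      ext x; simp
    simpa [pullN, this] using pullN_empty D f n

lemma pullN_inter_subset (D : ℕ → Set U) (f : ℕ → U → U) :
    ∀ n (S T : Set U), pullN D f n S ∩ pullN D f n T ⊆ pullN D f n (S ∩ T)
  | 0, _, _ => le_refl _
  | (n+1), S, T => by
    refine le_trans (pullN_inter_subset D f n _ _) (pullN_mono D f n ?_)
    rintro x ⟨⟨hx1, hx2⟩, ⟨_, hx4⟩⟩
    exact ⟨hx1, hx2, hx4⟩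

section maps

variable (Gs : ℕ → (⊤ : SimpleGraph U).Subgraph) (D : ℕ → Set U) (f : ℕ → U → U)

lemma pullN_subset_verts (hmap : ∀ n, AbsMinorMap (Gs n) (Gs (n + 1)) (D n) (f n)) :
    ∀ n (S : Set U), S ⊆ (Gs n).verts → pullN D f n S ⊆ (Gs 0).verts
  | 0, _, h => h
  | (n+1), S, _ =>
    pullN_subset_verts hmap n _ (fun x hx => (hmap n).1 hx.1)

lemma pullN_nonempty (hmap : ∀ n, AbsMinorMap (Gs n) (Gs (n + 1)) (D n) (f n)) :
    ∀ n (S : Set U), S ⊆ (Gs n).verts → S.Nonempty → (pullN D f n S).Nonempty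
  | 0, _, _, h => h
  | (n+1), S, hS, ⟨s, hs⟩ => by
    obtain ⟨x, hxD, hxf⟩ := (hmap n).2.2.1 s (hS hs)
    refine pullN_nonempty hmap n _ (fun y hy => (hmap n).1 hy.1) ⟨x, hxD, ?_⟩
    rw [hxf]; exact hs

lemma pullN_adj (hmap : ∀ n, AbsMinorMap (Gs n) (Gs (n + 1)) (D n) (f n)) :
    ∀ n (s t : U), (Gs n).Adj s t →
      ∃ a ∈ pullN D f n {s}, ∃ b ∈ pullN D f n {t}, (Gs 0).Adj a b
  | 0, s, t, h => ⟨s, rfl, t, rfl, h⟩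
  | (n+1), s, t, h => by
    obtain ⟨a', ⟨haD, haf⟩, b', ⟨hbD, hbf⟩, hadj⟩ := (hmap n).2.2.2.2.2.2 s t h
    obtain ⟨a, ha, b, hb, hab⟩ := pullN_adj hmap n a' b' hadj
    refine ⟨a, pullN_mono D f n ?_ ha, b, pullN_mono D f n ?_ hb, hab⟩
    · rintro x rfl; exact ⟨haD, by simp [haf]⟩
    · rintro x rfl; exact ⟨hbD, by simp [hbf]⟩

/-- The key one-step lemma: the pullback of a connected set under a minor-map
is connected. -/
lemma step_conn {G G' : (⊤ : SimpleGraph U).Subgraph} {Dx : Set U} {fx : U → U}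
    (hm : AbsMinorMap G G' Dx fx) {S : Set U} (hS : S ⊆ G'.verts)
    (hconn : (G'.induce S).Connected) :
    (G.induce {x | x ∈ Dx ∧ fx x ∈ S}).Connected := by
  classical
  set pre : Set U := {x | x ∈ Dx ∧ fx x ∈ S} with hpre
  set fib : U → Set U := fun s => {x | x ∈ Dx ∧ fx x = s} with hfib
  set K : (⊤ : SimpleGraph U).Subgraph := G.induce pre with hK
  obtain ⟨hDsub, hfmem, hfsurj, hbr_sub, hbr_conn, hbr_disj, hbr_adj⟩ := hm
  -- fibres lie in `pre`
  have hfib_sub : ∀ s ∈ S, fib s ⊆ pre := by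
    rintro s hs x ⟨hx1, hx2⟩; exact ⟨hx1, by rw [hx2]; exact hs⟩
  -- within one fibre, RTG holds
  have hA : ∀ s ∈ S, ∀ a ∈ fib s, ∀ b ∈ fib s, Relation.ReflTransGen K.Adj a b := by
    intro s hs a ha b hb
    have hc : (G.induce (fib s)).Connected := hbr_conn s (hS hs)
    have := rtg_of_connected hc (a := a) (b := b) ha hb
    refine Relation.ReflTransGen.mono ?_ _ _ this
    rintro x y ⟨hx, hy, hxy⟩
    exact ⟨hfib_sub s hs hx, hfib_sub s hs hy, hxy⟩
  -- main claim along a RTG in `G'.induce S`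
  have hmain : ∀ s t : U, Relation.ReflTransGen (G'.induce S).Adj s t →
      s ∈ S → ∀ a ∈ fib s, ∀ b ∈ fib t, Relation.ReflTransGen K.Adj a b := by
    intro s t hr
    induction hr using Relation.ReflTransGen.head_induction_on with
    | refl => intro hs a ha b hb; exact hA _ hs a ha b hb
    | @head s u hadj hrest ih =>
      intro hs a ha b hb
      obtain ⟨hsS, huS, hsu⟩ := hadj
      obtain ⟨a', ha', u', hu', hadj'⟩ := hbr_adj s u hsu
      have h1 : Relation.ReflTransGen K.Adj a a' := hA s hsS a ha a' ha'
      have h2 : K.Adj a' u' := ⟨hfib_sub s hsS ha', hfib_sub u huS hu', hadj'⟩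
      have h3 : Relation.ReflTransGen K.Adj u' b := ih huS u' hu' b hb
      exact (h1.tail h2).trans h3
  -- nonemptiness
  have hSne : S.Nonempty := by
    have := hconn.nonempty
    simpa using this
  obtain ⟨s₀, hs₀⟩ := hSne
  obtain ⟨x₀, hx₀D, hx₀f⟩ := hfsurj s₀ (hS hs₀)
  refine connected_of_rtg K ⟨x₀, hx₀D, by rw [hx₀f]; exact hs₀⟩ ?_
  intro a ha b hb
  have haS : fx a ∈ S := ha.2
  have hbS : fx b ∈ S := hb.2
  have hr : Relation.ReflTransGen (G'.induce S).Adj (fx a) (fx b) :=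
    rtg_of_connected hconn (a := fx a) (b := fx b) haS hbS
  exact hmain _ _ hr haS a ⟨ha.1, rfl⟩ b ⟨hb.1, rfl⟩

lemma pullN_conn (hmap : ∀ n, AbsMinorMap (Gs n) (Gs (n + 1)) (D n) (f n)) :
    ∀ n (S : Set U), S ⊆ (Gs n).verts → ((Gs n).induce S).Connected →
      ((Gs 0).induce (pullN D f n S)).Connected
  | 0, _, _, h => h
  | (n+1), S, hS, hconn => by
    refine pullN_conn hmap n _ (fun x hx => (hmap n).1 hx.1) ?_
    exact step_conn (hmap n) hS hconn

end maps

end L512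

/-- **Lemma 5.12.** If `G₀, G₁, …` and `H₀ ⊆ H₁ ⊆ …` are sequences of graphs with
`Hₙ ⊆ Gₙ` and there are minor-maps `φₙ : Gₙ ≽ Gₙ₊₁` restricting to the identity on `Hₙ`,
then `⋃ₙ Hₙ` is a minor of `G₀`. -/
theorem union_minor_of_minorMaps {U : Type u} (G H : ℕ → (⊤ : SimpleGraph U).Subgraph)
    (hHG : ∀ n, H n ≤ G n) (hmono : ∀ n, H n ≤ H (n + 1))
    (D : ℕ → Set U) (f : ℕ → U → U)
    (hmap : ∀ n, AbsMinorMap (G n) (G (n + 1)) (D n) (f n))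
    (hid : ∀ n, ∀ x ∈ (H n).verts, x ∈ D n ∧ f n x = x) :
    ∃ br : U → Set U, AbsMinorModel (G 0) (⨆ n, H n) br := by
  classical
  set Q : ℕ → U → Set U :=
    fun n h => if h ∈ (H n).verts then L512.pullN D f n {h} else ∅ with hQdef
  have hHmono : ∀ {n m : ℕ}, n ≤ m → H n ≤ H m := fun {n m} hnm =>
    monotone_nat_of_le_succ hmono hnm
  have hvmono : ∀ {n m : ℕ} {h : U}, n ≤ m → h ∈ (H n).verts → h ∈ (H m).verts :=
    fun hnm hh => (hHmono hnm).1 hh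
  have hsing : ∀ {n : ℕ} {h : U}, h ∈ (H n).verts → ({h} : Set U) ⊆ (G n).verts := by
    intro n h hh x hx
    rw [Set.mem_singleton_iff] at hx
    subst hx
    exact (hHG n).1 hh
  have hQ_sub_pull : ∀ n h, Q n h ⊆ L512.pullN D f n {h} := by
    intro n h x hx
    by_cases hh : h ∈ (H n).verts
    · simpa [hQdef, hh] using hx
    · simp [hQdef, hh] at hx
  have hQ_mem : ∀ {n h x}, x ∈ Q n h → h ∈ (H n).verts := by
    intro n h x hx
    by_cases hh : h ∈ (H n).verts
    · exact hh
    · simp [hQdef, hh] at hx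
  have hQ_succ : ∀ n h, Q n h ⊆ Q (n + 1) h := by
    intro n h x hx
    have hh : h ∈ (H n).verts := hQ_mem hx
    have hh' : h ∈ (H (n + 1)).verts := hvmono (Nat.le_succ n) hh
    have hx' : x ∈ L512.pullN D f n {h} := hQ_sub_pull n h hx
    have hsub : ({h} : Set U) ⊆ {y | y ∈ D n ∧ f n y ∈ ({h} : Set U)} := by
      rintro y hy
      rw [Set.mem_singleton_iff] at hy
      subst hy
      exact ⟨(hid n y hh).1, by simp [(hid n y hh).2]⟩
    have : x ∈ L512.pullN D f (n + 1) {h} := L512.pullN_mono D f n hsub hx'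
    simpa [hQdef, hh']
  have hQ_mono : ∀ {n m : ℕ} (h : U), n ≤ m → Q n h ⊆ Q m h := by
    intro n m h hnm
    exact monotone_nat_of_le_succ (f := fun k => Q k h) (fun k => hQ_succ k h) hnm
  have hQ_eq : ∀ {n h}, h ∈ (H n).verts → Q n h = L512.pullN D f n {h} := by
    intro n h hh; simp [hQdef, hh]
  refine ⟨fun h => ⋃ n, Q n h, ?_, ?_, ?_, ?_⟩
  · -- branch sets inside `(G 0).verts`
    intro h _ x hx
    obtain ⟨n, hn⟩ := Set.mem_iUnion.mp hx
    have hh := hQ_mem hn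
    exact L512.pullN_subset_verts G D f hmap n {h} (hsing hh) (hQ_sub_pull n h hn)
  · -- connectivity
    intro h hh
    rw [SimpleGraph.Subgraph.verts_iSup, Set.mem_iUnion] at hh
    obtain ⟨N, hN⟩ := hh
    have hpull_conn : ∀ m, h ∈ (H m).verts →
        ((G 0).induce (L512.pullN D f m {h})).Connected := by
      intro m hm
      refine L512.pullN_conn G D f hmap m {h} (hsing hm) ?_
      refine L512.connected_of_rtg _ ⟨h, rfl⟩ ?_
      intro a ha b hb
      simp only [SimpleGraph.Subgraph.induce_verts, Set.mem_singleton_iff] at ha hb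
      subst ha; subst hb; exact Relation.ReflTransGen.refl
    have hne : (⋃ n, Q n h).Nonempty := by
      obtain ⟨x, hx⟩ := L512.pullN_nonempty G D f hmap N {h} (hsing hN) ⟨h, rfl⟩
      exact ⟨x, Set.mem_iUnion.mpr ⟨N, (hQ_eq hN) ▸ hx⟩⟩
    refine L512.connected_of_rtg _ (by simpa using hne) ?_
    intro a ha b hb
    simp only [SimpleGraph.Subgraph.induce_verts, Set.mem_iUnion] at ha hb
    obtain ⟨n, hn⟩ := ha
    obtain ⟨m, hm⟩ := hb
    have hM1 : a ∈ Q (max n m) h := hQ_mono h (le_max_left n m) hn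
    have hM2 : b ∈ Q (max n m) h := hQ_mono h (le_max_right n m) hm
    have hhM : h ∈ (H (max n m)).verts := hQ_mem hM1
    rw [hQ_eq hhM] at hM1 hM2
    have hrtg := L512.rtg_of_connected (hpull_conn (max n m) hhM)
      (a := a) (b := b) (by simpa using hM1) (by simpa using hM2)
    refine Relation.ReflTransGen.mono ?_ _ _ hrtg
    rintro x y ⟨hx, hy, hxy⟩
    exact ⟨Set.mem_iUnion.mpr ⟨max n m, (hQ_eq hhM) ▸ hx⟩,
      Set.mem_iUnion.mpr ⟨max n m, (hQ_eq hhM) ▸ hy⟩, hxy⟩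
  · -- disjointness
    intro h _ h' _ hne
    rw [Set.disjoint_left]
    intro x hx hx'
    obtain ⟨n, hn⟩ := Set.mem_iUnion.mp hx
    obtain ⟨m, hm⟩ := Set.mem_iUnion.mp hx'
    have h1 : x ∈ L512.pullN D f (max n m) {h} :=
      hQ_sub_pull _ _ (hQ_mono h (le_max_left n m) hn)
    have h2 : x ∈ L512.pullN D f (max n m) {h'} :=
      hQ_sub_pull _ _ (hQ_mono h' (le_max_right n m) hm)
    have h3 : x ∈ L512.pullN D f (max n m) ({h} ∩ {h'}) :=
      L512.pullN_inter_subset D f (max n m) {h} {h'} ⟨h1, h2⟩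
    have h4 : ({h} : Set U) ∩ {h'} = ∅ := by
      ext y; simp only [Set.mem_inter_iff, Set.mem_singleton_iff, Set.mem_empty_iff_false,
        iff_false, not_and]
      rintro rfl rfl; exact hne rfl
    rw [h4, L512.pullN_empty] at h3
    exact h3
  · -- adjacency
    intro h h' hadj
    rw [SimpleGraph.Subgraph.iSup_adj] at hadj
    obtain ⟨n, hn⟩ := hadj
    have hGadj : (G n).Adj h h' := (hHG n).2 hn
    obtain ⟨a, ha, b, hb, hab⟩ := L512.pullN_adj G D f hmap n h h' hGadj
    have hh : h ∈ (H n).verts := (H n).edge_vert hn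
    have hh' : h' ∈ (H n).verts := (H n).edge_vert hn.symm
    exact ⟨a, Set.mem_iUnion.mpr ⟨n, (hQ_eq hh) ▸ ha⟩,
      b, Set.mem_iUnion.mpr ⟨n, (hQ_eq hh') ▸ hb⟩, hab⟩
end

section
/- If A and B are two infinite vertex sets in a graph G that does not contain a subdivision of the countably infinite complete graph K^{ℵ0}, then there are vertices a ∈ A and b ∈ B together with a finite vertex set S ⊆ V(G) ∖ {a, b} such that S separates a and b in the graph G − ab obtained from G by deleting the edge ab if present. -/
open SimpleGraph

universe u v

namespace TK0Aux

variable {V : Type u} (G : SimpleGraph V)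

/-- An item of the construction history: either a chosen branch vertex or a chosen walk. -/
abbrev Item (G : SimpleGraph V) : Type u := V ⊕ ((x : V) × (y : V) × G.Walk x y)

/-- The vertices of an item. -/
def iv : Item G → Set V
  | Sum.inl v => {v}
  | Sum.inr it => {z | z ∈ it.2.2.support}

/-- All vertices used by a history. -/
def usedL (h : List (Item G)) : Set V := {v | ∃ it ∈ h, v ∈ iv G it}

lemma iv_finite (it : Item G) : (iv G it).Finite := by
  rcases it with v | ⟨x, y, w⟩
  · exact Set.finite_singleton v
  · exact w.support.finite_toSet

lemma usedL_finite (h : List (Item G)) : (usedL G h).Finite := by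
  have he : usedL G h = ⋃ it ∈ {it | it ∈ h}, iv G it := by
    ext v; simp [usedL]
  rw [he]
  exact Set.Finite.biUnion h.finite_toSet fun it _ => iv_finite G it

noncomputable def outV [Nonempty V] : Item G → V
  | Sum.inl v => v
  | Sum.inr _ => Classical.arbitrary V

noncomputable def vaL [Nonempty V] (h : List (Item G)) (n : ℕ) : V :=
  outV G ((h[2 * n]?).getD (Sum.inl (Classical.arbitrary V)))

variable (A : Set V)

open scoped Classical in
noncomputable def nextIt [Nonempty V] (hA : A.Infinite) (h : List (Item G)) : Item G :=
  if h.length % 2 = 0 then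
    Sum.inl (hA.diff (usedL_finite G h)).nonempty.some
  else if hw : ∃ w : G.Walk (vaL G h ((h.length / 2).unpair.1))
        (vaL G h ((h.length / 2).unpair.2)),
      ∀ z ∈ w.support, z ∈ usedL G h →
        z = vaL G h ((h.length / 2).unpair.1) ∨ z = vaL G h ((h.length / 2).unpair.2)
    then Sum.inr ⟨_, _, hw.choose⟩
    else Sum.inl (Classical.arbitrary V)

noncomputable def hist [Nonempty V] (hA : A.Infinite) : ℕ → List (Item G)
  | 0 => []
  | t + 1 => hist hA t ++ [nextIt G A hA (hist hA t)]

noncomputable def seqI [Nonempty V] (hA : A.Infinite) (t : ℕ) : Item G :=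
  nextIt G A hA (hist G A hA t)

variable [Nonempty V] (hA : A.Infinite)

lemma hist_succ (t : ℕ) : hist G A hA (t + 1) = hist G A hA t ++ [seqI G A hA t] := rfl

lemma hist_length (t : ℕ) : (hist G A hA t).length = t := by
  induction t with
  | zero => rfl
  | succ t ih => rw [hist_succ]; simp [ih]

lemma mem_hist (t : ℕ) (it : Item G) :
    it ∈ hist G A hA t ↔ ∃ s < t, seqI G A hA s = it := by
  induction t with
  | zero => simp [hist]
  | succ t ih =>
    rw [hist_succ]
    simp only [List.mem_append, List.mem_singleton, ih]
    constructor
    · rintro (⟨s, hs, h⟩ | h)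
      · exact ⟨s, by omega, h⟩
      · exact ⟨t, by omega, h.symm⟩
    · rintro ⟨s, hs, h⟩
      rcases Nat.lt_succ_iff_lt_or_eq.1 hs with hs | rfl
      · exact Or.inl ⟨s, hs, h⟩
      · exact Or.inr h.symm

lemma mem_used {t : ℕ} {z : V} :
    z ∈ usedL G (hist G A hA t) ↔ ∃ s < t, z ∈ iv G (seqI G A hA s) := by
  constructor
  · rintro ⟨it, hit, hz⟩
    obtain ⟨s, hs, rfl⟩ := (mem_hist G A hA t it).1 hit
    exact ⟨s, hs, hz⟩
  · rintro ⟨s, hs, hz⟩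
    exact ⟨_, (mem_hist G A hA t _).2 ⟨s, hs, rfl⟩, hz⟩

lemma used_mono {s t : ℕ} (h : s ≤ t) :
    usedL G (hist G A hA s) ⊆ usedL G (hist G A hA t) := by
  intro z hz
  rw [mem_used] at hz ⊢
  obtain ⟨r, hr, hz⟩ := hz
  exact ⟨r, by omega, hz⟩

noncomputable def va (n : ℕ) : V := outV G (seqI G A hA (2 * n))

lemma va_spec (n : ℕ) :
    seqI G A hA (2 * n) = Sum.inl (va G A hA n) ∧ va G A hA n ∈ A ∧
      va G A hA n ∉ usedL G (hist G A hA (2 * n)) := by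
  have hc := (hA.diff (usedL_finite G (hist G A hA (2 * n)))).nonempty.some_mem
  have he : seqI G A hA (2 * n) =
      Sum.inl (hA.diff (usedL_finite G (hist G A hA (2 * n)))).nonempty.some := by
    unfold seqI nextIt
    rw [if_pos (by rw [hist_length]; omega)]
  have hva : va G A hA n = (hA.diff (usedL_finite G (hist G A hA (2 * n)))).nonempty.some := by
    rw [va, he]; rfl
  rw [hva, he]
  exact ⟨rfl, hc.1, hc.2⟩

lemma hist_get {t s : ℕ} (h : s < t) : (hist G A hA t)[s]? = some (seqI G A hA s) := by
  induction t with
  | zero => omega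
  | succ t ih =>
    rw [hist_succ]
    rcases Nat.lt_succ_iff_lt_or_eq.1 h with h' | rfl
    · rw [List.getElem?_append_left (by rw [hist_length]; exact h')]
      exact ih h'
    · have hc : (hist G A hA s ++ [seqI G A hA s])[(hist G A hA s).length]? = some (seqI G A hA s) :=
        List.getElem?_concat_length
      rwa [hist_length] at hc

lemma vaL_hist {n t : ℕ} (h : 2 * n < t) : vaL G (hist G A hA t) n = va G A hA n := by
  unfold vaL
  rw [hist_get G A hA h, Option.getD_some]
  rfl

lemma va_lt_mem {m n : ℕ} (h : m < n) :
    va G A hA m ∈ usedL G (hist G A hA (2 * n)) := by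
  rw [mem_used]
  refine ⟨2 * m, by omega, ?_⟩
  rw [(va_spec G A hA m).1]
  exact rfl

lemma va_injective : Function.Injective (va G A hA) := by
  intro m n hmn
  by_contra hne
  rcases Nat.lt_or_ge m n with h | h
  · exact (va_spec G A hA n).2.2 (hmn ▸ va_lt_mem G A hA h)
  · have h' : n < m := by omega
    exact (va_spec G A hA m).2.2 (hmn.symm ▸ va_lt_mem G A hA h')

lemma seq_odd
    (conn : ∀ a ∈ A, ∀ a' ∈ A, ∀ S : Set V, S.Finite → a ∉ S → a' ∉ S →
      ∃ w : G.Walk a a', ∀ z ∈ w.support, z ∉ S) (m : ℕ) :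
    ∃ (x y : V) (w : G.Walk x y), x = va G A hA m.unpair.1 ∧ y = va G A hA m.unpair.2 ∧
      seqI G A hA (2 * m + 1) = Sum.inr ⟨x, y, w⟩ ∧
      ∀ z ∈ w.support, z ∈ usedL G (hist G A hA (2 * m + 1)) → z = x ∨ z = y := by
  classical
  set h := hist G A hA (2 * m + 1) with hh
  have hlen : h.length = 2 * m + 1 := hist_length G A hA _
  have hq : h.length / 2 = m := by omega
  have hx : vaL G h ((h.length / 2).unpair.1) = va G A hA m.unpair.1 := by
    rw [hq]; exact vaL_hist G A hA (by have := Nat.unpair_left_le m; omega)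
  have hy : vaL G h ((h.length / 2).unpair.2) = va G A hA m.unpair.2 := by
    rw [hq]; exact vaL_hist G A hA (by have := Nat.unpair_right_le m; omega)
  have hC : ∃ w : G.Walk (vaL G h ((h.length / 2).unpair.1))
        (vaL G h ((h.length / 2).unpair.2)),
      ∀ z ∈ w.support, z ∈ usedL G h →
        z = vaL G h ((h.length / 2).unpair.1) ∨ z = vaL G h ((h.length / 2).unpair.2) := by
    rw [hx, hy]
    obtain ⟨w, hw⟩ := conn _ (va_spec G A hA m.unpair.1).2.1 _ (va_spec G A hA m.unpair.2).2.1
      (usedL G h \ {va G A hA m.unpair.1, va G A hA m.unpair.2})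
      ((usedL_finite G h).diff) (by simp) (by simp)
    refine ⟨w, fun z hz hzu => ?_⟩
    have hns := hw z hz
    by_contra hne
    push_neg at hne
    exact hns ⟨hzu, by simp [hne.1, hne.2]⟩
  have he : seqI G A hA (2 * m + 1) = Sum.inr ⟨_, _, hC.choose⟩ := by
    unfold seqI nextIt
    rw [if_neg (by rw [hist_length]; omega), dif_pos hC]
  exact ⟨_, _, hC.choose, hx, hy, he, hC.choose_spec⟩

include hA in
lemma build_topminor
    (conn : ∀ a ∈ A, ∀ a' ∈ A, ∀ S : Set V, S.Finite → a ∉ S → a' ∉ S →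
      ∃ w : G.Walk a a', ∀ z ∈ w.support, z ∉ S) :
    IsTopMinor G (⊤ : SimpleGraph ℕ) := by
  classical
  have PS : ∀ x y : ℕ, ∃ w : G.Walk (va G A hA x) (va G A hA y),
      (∀ z ∈ w.support, z ∈ usedL G (hist G A hA (2 * Nat.pair x y + 1)) →
        z = va G A hA x ∨ z = va G A hA y) ∧
      (∀ z ∈ w.support, z ∈ usedL G (hist G A hA (2 * Nat.pair x y + 2))) := by
    intro x y
    obtain ⟨x0, y0, w, hx0, hy0, he, hsup⟩ := seq_odd G A hA conn (Nat.pair x y)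
    simp only [Nat.unpair_pair] at hx0 hy0
    subst hx0
    subst hy0
    refine ⟨w, hsup, ?_⟩
    intro z hz
    rw [mem_used]
    refine ⟨2 * Nat.pair x y + 1, by omega, ?_⟩
    rw [he]
    exact hz
  choose W hW1 hW2 using PS
  have hinj : Function.Injective (va G A hA) := va_injective G A hA
  have havoid : ∀ k x y : ℕ, k ≠ x → k ≠ y → va G A hA k ∉ (W x y).support := by
    intro k x y hkx hky hmem
    rcases Nat.lt_or_ge (2 * k) (2 * Nat.pair x y + 1) with hlt | hge
    · have hk : va G A hA k ∈ usedL G (hist G A hA (2 * Nat.pair x y + 1)) := by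
        rw [mem_used]
        exact ⟨2 * k, hlt, by rw [(va_spec G A hA k).1]; exact rfl⟩
      rcases hW1 x y _ hmem hk with h' | h'
      · exact hkx (hinj h')
      · exact hky (hinj h')
    · have h2 : 2 * Nat.pair x y + 2 ≤ 2 * k := by omega
      exact (va_spec G A hA k).2.2 (used_mono G A hA h2 (hW2 x y _ hmem))
  have hkey : ∀ x y x' y' : ℕ, Nat.pair x y < Nat.pair x' y' → ∀ z : V,
      z ∈ (W x y).support → z ∈ (W x' y').support →
      (z = va G A hA x ∨ z = va G A hA y) ∧ (z = va G A hA x' ∨ z = va G A hA y') := by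
    intro x y x' y' hlt z hz hz'
    have h2 : z ∈ usedL G (hist G A hA (2 * Nat.pair x' y' + 1)) :=
      used_mono G A hA (by omega) (hW2 x y z hz)
    have hc2 := hW1 x' y' z hz' h2
    refine ⟨?_, hc2⟩
    rcases hc2 with rfl | rfl
    · by_cases hx : x' = x
      · exact Or.inl (by rw [hx])
      · by_cases hy : x' = y
        · exact Or.inr (by rw [hy])
        · exact absurd hz (havoid x' x y hx hy)
    · by_cases hx : y' = x
      · exact Or.inl (by rw [hx])
      · by_cases hy : y' = y
        · exact Or.inr (by rw [hy])
        · exact absurd hz (havoid y' x y hx hy)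
  refine ⟨va G A hA, hinj, fun x y _ => (W x y).bypass,
    fun x y _ => SimpleGraph.Walk.bypass_isPath _, ?_, ?_⟩
  · intro x y _ w hw
    by_contra hne
    push_neg at hne
    exact havoid w x y hne.1 hne.2 (SimpleGraph.Walk.support_bypass_subset _ hw)
  · intro x y x' y' _ _ hs z hz hz'
    have hzz := SimpleGraph.Walk.support_bypass_subset _ hz
    have hzz' := SimpleGraph.Walk.support_bypass_subset _ hz'
    have hne : Nat.pair x y ≠ Nat.pair x' y' := by
      intro hp
      rcases Nat.pair_eq_pair.1 hp with ⟨rfl, rfl⟩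
      exact hs rfl
    rcases hne.lt_or_gt with hlt | hlt
    · exact hkey x y x' y' hlt z hzz hzz'
    · obtain ⟨h1, h2⟩ := hkey x' y' x y hlt z hzz' hzz
      exact ⟨h2, h1⟩

end TK0Aux


/-- **Lemma 6.1.** If `A` and `B` are infinite vertex sets in a graph `G` without a
subdivision of `K^ℵ₀`, then there are `a ∈ A`, `b ∈ B` and a finite vertex set
`S ⊆ V(G) \ {a, b}` separating `a` and `b` in `G - ab`. -/
theorem finite_separator_of_no_TKaleph0 {V : Type u} (G : SimpleGraph V)
    (A B : Set V) (hA : A.Infinite) (hB : B.Infinite)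
    (hK : ¬ IsTopMinor G (⊤ : SimpleGraph ℕ)) :
    ∃ a ∈ A, ∃ b ∈ B, ∃ S : Set V, S.Finite ∧
      VSeparates (G.deleteEdges {s(a, b)}) S a b := by
  classical
  by_contra hcon
  push_neg at hcon
  haveI hne : Nonempty V := ⟨hA.nonempty.some⟩
  apply hK
  apply TK0Aux.build_topminor G A hA
  intro a ha a' ha' S hS haS ha'S
  obtain ⟨b, hb⟩ := (hB.diff hS).nonempty
  have key : ∀ x ∈ A, x ∉ S → ∃ w : G.Walk x b, ∀ z ∈ w.support, z ∉ S := by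
    intro x hx hxS
    have h1 := hcon x hx b hb.1 S hS
    rw [VSeparates] at h1
    push_neg at h1
    obtain ⟨p, hp⟩ := h1 hxS hb.2
    refine ⟨p.mapLe (G.deleteEdges_le _), fun z hz => ?_⟩
    apply hp z
    simpa [SimpleGraph.Walk.mapLe, SimpleGraph.Walk.support_map] using hz
  obtain ⟨w1, hw1⟩ := key a ha haS
  obtain ⟨w2, hw2⟩ := key a' ha' ha'S
  refine ⟨w1.append w2.reverse, fun z hz => ?_⟩
  rcases (SimpleGraph.Walk.mem_support_append_iff _ _).1 hz with h | h
  · exact hw1 z h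
  · exact hw2 z (by rwa [SimpleGraph.Walk.support_reverse, List.mem_reverse] at h)
end

section
/- Suppose that G is an infinitely edge-connected graph and that u, v are two distinct vertices of G that are separated in G by some finite vertex set S ⊆ V(G) ∖ {u, v}. Then there exist induced subgraphs H_u, H_v ⊆ G containing u and v respectively such that: (i) X := V(H_u) ∩ V(H_v) is finite, nonempty and induces a connected subgraph of G; (ii) both H_u/X and H_v/X (the graphs obtained by contracting X to a single vertex) are infinitely edge-connected; (iii) X avoids u and v; (iv) u is adjacent to the contracted vertex X in H_u/X, and v is adjacent to the contracted vertex X in H_v/X. -/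
open SimpleGraph

universe u v

/-! ### Auxiliary lemmas for Lemma 6.3 -/

namespace L63

variable {V : Type u} {W : Type v}

lemma exists_walk_avoiding {G : SimpleGraph V} (hG : InfEdgeConnected G) {a b : V}
    (hab : a ≠ b) (F : Set (Sym2 V)) (hF : F.Finite) :
    ∃ w : G.Walk a b, ∀ e ∈ w.edges, e ∉ F := by
  have h := hG.2 a b hab
  have h3 : ¬ EdgeSeparates G F a b := fun he => h ⟨F, hF, he⟩
  unfold EdgeSeparates at h3
  push_neg at h3
  exact h3

lemma walk_push {G : SimpleGraph V} {H : SimpleGraph W} (f : V → W) :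
    ∀ {a b : V} (w : G.Walk a b),
      (∀ ⦃x y : V⦄, G.Adj x y → s(x, y) ∈ w.edges → f x = f y ∨ H.Adj (f x) (f y)) →
      ∃ w' : H.Walk (f a) (f b),
        ∀ e' ∈ w'.edges, ∃ x y : V, s(x, y) ∈ w.edges ∧ G.Adj x y ∧ e' = s(f x, f y) := by
  intro a b w
  induction w with
  | nil => exact fun _ => ⟨Walk.nil, by simp⟩
  | @cons a c b h p ih =>
    intro hf
    have hmem : s(a, c) ∈ (Walk.cons h p).edges := by
      rw [Walk.edges_cons]; exact List.mem_cons_self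
    have hf' : ∀ ⦃x y : V⦄, G.Adj x y → s(x, y) ∈ p.edges → f x = f y ∨ H.Adj (f x) (f y) := by
      intro x y hxy hxye
      exact hf hxy (by rw [Walk.edges_cons]; exact List.mem_cons_of_mem _ hxye)
    obtain ⟨w', hw'⟩ := ih hf'
    rcases hf h hmem with heq | hadj
    · refine ⟨w'.copy heq.symm rfl, ?_⟩
      intro e' he'
      rw [Walk.edges_copy] at he'
      obtain ⟨x, y, hxy1, hxy2, hxy3⟩ := hw' e' he'
      exact ⟨x, y, by rw [Walk.edges_cons]; exact List.mem_cons_of_mem _ hxy1, hxy2, hxy3⟩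
    · refine ⟨Walk.cons hadj w', ?_⟩
      intro e' he'
      rw [Walk.edges_cons] at he'
      rcases List.mem_cons.mp he' with rfl | he'
      · exact ⟨a, c, hmem, h, rfl⟩
      · obtain ⟨x, y, hxy1, hxy2, hxy3⟩ := hw' e' he'
        exact ⟨x, y, by rw [Walk.edges_cons]; exact List.mem_cons_of_mem _ hxy1, hxy2, hxy3⟩

lemma induced_reachable {G : SimpleGraph V} {X : Set V} :
    ∀ {a b : V} (w : G.Walk a b) (_ : ∀ z ∈ w.support, z ∈ X) (ha : a ∈ X) (hb : b ∈ X),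
      (G.induce X).Reachable ⟨a, ha⟩ ⟨b, hb⟩ := by
  intro a b w
  induction w with
  | nil => intro _ ha hb; rfl
  | @cons a c b h p ih =>
    intro hsupp ha hb
    have hc : c ∈ X := hsupp c
      (by rw [Walk.support_cons]; exact List.mem_cons_of_mem _ p.start_mem_support)
    have hadj : (G.induce X).Adj ⟨a, ha⟩ ⟨c, hc⟩ := h
    refine hadj.reachable.trans (ih ?_ hc hb)
    intro z hz
    exact hsupp z (by rw [Walk.support_cons]; exact List.mem_cons_of_mem _ hz)

section Segment

variable {G : SimpleGraph V} [DecidableEq V]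

lemma support_split {a b c : V} (p : G.Walk a b) (hc : c ∈ p.support) :
    p.support = (p.takeUntil c hc).support ++ (p.dropUntil c hc).support.tail := by
  conv_lhs => rw [← p.take_spec hc]
  rw [Walk.support_append]

lemma drop_avoid {a b c : V} (p : G.Walk a b) (hp : p.support.Nodup) (hc : c ∈ p.support)
    (hca : c ≠ a) : a ∉ (p.dropUntil c hc).support := by
  intro ha
  have hsplit := support_split p hc
  have hdisj : ((p.takeUntil c hc).support).Disjoint ((p.dropUntil c hc).support.tail) := by
    have := hsplit ▸ hp
    exact List.disjoint_of_nodup_append this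
  have h1 : a ∈ (p.takeUntil c hc).support := (p.takeUntil c hc).start_mem_support
  have h2 : a ∈ (p.dropUntil c hc).support.tail := by
    have := (p.dropUntil c hc).support_eq_cons
    rw [this] at ha
    rcases List.mem_cons.mp ha with rfl | h
    · exact absurd rfl hca
    · exact h
  exact hdisj h1 h2

lemma take_avoid {a b c : V} (p : G.Walk a b) (hp : p.support.Nodup) (hc : c ∈ p.support)
    (hcb : c ≠ b) : b ∉ (p.takeUntil c hc).support := by
  intro hb
  have hsplit := support_split p hc
  have hdisj : ((p.takeUntil c hc).support).Disjoint ((p.dropUntil c hc).support.tail) := by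
    have := hsplit ▸ hp
    exact List.disjoint_of_nodup_append this
  have h2 : b ∈ (p.dropUntil c hc).support.tail := by
    have h3 : b ∈ (p.dropUntil c hc).support := (p.dropUntil c hc).end_mem_support
    rw [(p.dropUntil c hc).support_eq_cons] at h3
    rcases List.mem_cons.mp h3 with rfl | h
    · exact absurd rfl (Ne.symm hcb)
    · exact h
  exact hdisj hb h2

lemma take_nodup {a b c : V} (p : G.Walk a b) (hp : p.support.Nodup) (hc : c ∈ p.support) :
    (p.takeUntil c hc).support.Nodup := by
  have := support_split p hc ▸ hp
  exact (List.nodup_append.mp this).1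

lemma drop_nodup {a b c : V} (p : G.Walk a b) (hp : p.support.Nodup) (hc : c ∈ p.support) :
    (p.dropUntil c hc).support.Nodup := by
  have hsp := support_split p hc ▸ hp
  obtain ⟨h1, h2, h3⟩ := List.nodup_append.mp hsp
  rw [(p.dropUntil c hc).support_eq_cons]
  refine List.nodup_cons.mpr ⟨?_, h2⟩
  intro hmem
  exact h3 _ ((p.takeUntil c hc).end_mem_support) _ hmem rfl

lemma segment_exists {u v : V} (p : G.Walk u v) (hp : p.IsPath) {z y : V}
    (hz : z ∈ p.support) (hzu : z ≠ u) (hzv : z ≠ v)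
    (hy : y ∈ p.support) (hyu : y ≠ u) (hyv : y ≠ v) :
    ∃ w : G.Walk z y, u ∉ w.support ∧ v ∉ w.support := by
  have hnd : p.support.Nodup := (Walk.isPath_def p).mp hp
  have hy' : y ∈ (p.takeUntil z hz).support ∨ y ∈ (p.dropUntil z hz).support := by
    have : y ∈ ((p.takeUntil z hz).append (p.dropUntil z hz)).support := by
      rw [p.take_spec hz]; exact hy
    exact (Walk.mem_support_append_iff _ _).mp this
  rcases hy' with hyt | hyd
  · set t := p.takeUntil z hz with ht
    have htnd : t.support.Nodup := take_nodup p hnd hz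
    have hu1 : u ∉ (t.dropUntil y hyt).support := drop_avoid t htnd hyt hyu
    have hv1 : v ∉ (t.dropUntil y hyt).support := by
      intro hv'
      have : v ∈ t.support := Walk.support_dropUntil_subset t hyt hv'
      exact take_avoid p hnd hz hzv this
    refine ⟨(t.dropUntil y hyt).reverse, ?_, ?_⟩ <;>
      · rw [Walk.support_reverse]; intro hmem; rw [List.mem_reverse] at hmem
        first | exact hu1 hmem | exact hv1 hmem
  · set d := p.dropUntil z hz with hd
    have hdnd : d.support.Nodup := drop_nodup p hnd hz
    have hu1 : u ∉ (d.takeUntil y hyd).support := by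
      intro hu'
      have : u ∈ d.support := Walk.support_takeUntil_subset d hyd hu'
      exact drop_avoid p hnd hz hzu this
    have hv1 : v ∉ (d.takeUntil y hyd).support := take_avoid d hdnd hyd hyv
    exact ⟨d.takeUntil y hyd, hu1, hv1⟩

end Segment

/-- The vertices reachable from `s` by a walk avoiding `u` and `v`. -/
def CR (G : SimpleGraph V) (u v s : V) : Set V :=
  {c | ∃ w : G.Walk s c, u ∉ w.support ∧ v ∉ w.support}

lemma CR_avoid {G : SimpleGraph V} {u v s c : V} (hc : c ∈ CR G u v s) : c ≠ u ∧ c ≠ v := by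
  obtain ⟨w, hu, hv⟩ := hc
  exact ⟨fun h => hu (h ▸ w.end_mem_support), fun h => hv (h ▸ w.end_mem_support)⟩

lemma CR_closure {G : SimpleGraph V} {u v s c d : V} (hc : c ∈ CR G u v s)
    (hcd : G.Adj c d) (hdu : d ≠ u) (hdv : d ≠ v) : d ∈ CR G u v s := by
  obtain ⟨w, hu, hv⟩ := hc
  refine ⟨w.concat hcd, ?_, ?_⟩ <;>
    · rw [Walk.support_concat]; intro h
      rcases List.mem_append.mp h with h | h
      · first | exact hu h | exact hv h
      · rw [List.mem_singleton] at h
        first | exact hdu h.symm | exact hdv h.symm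

lemma CR_of_walk {G : SimpleGraph V} [DecidableEq V] {u v s c : V} (w : G.Walk s c)
    (hu : u ∉ w.support) (hv : v ∉ w.support) {z : V} (hz : z ∈ w.support) :
    z ∈ CR G u v s := by
  refine ⟨w.takeUntil z hz, ?_, ?_⟩ <;> intro h
  · exact hu (Walk.support_takeUntil_subset w hz h)
  · exact hv (Walk.support_takeUntil_subset w hz h)

lemma exists_good_channel {G : SimpleGraph V} (hG : InfEdgeConnected G) {u v : V}
    (huv : u ≠ v) {S : Set V} (hS : S.Finite) (hsep : VSeparates G S u v) :
    ∃ s₀ ∈ S, ∀ F : Set (Sym2 V), F.Finite →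
      ∃ w : G.Walk u v, (∀ e ∈ w.edges, e ∉ F) ∧
        ∀ z ∈ w.support, z ∈ CR G u v s₀ ∪ {u, v} := by
  classical
  by_contra hcon
  push_neg at hcon
  choose Fs hFsfin hFs using hcon
  haveI : Finite ↥S := hS.to_subtype
  set Fstar : Set (Sym2 V) := ⋃ (s : ↥S), Fs s.1 s.2 with hFstar
  have hFstarfin : Fstar.Finite := Set.finite_iUnion (fun s => hFsfin s.1 s.2)
  obtain ⟨w, hw⟩ := exists_walk_avoiding hG huv Fstar hFstarfin
  set p := w.bypass with hpdef
  have hp : p.IsPath := w.bypass_isPath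
  have hpav : ∀ e ∈ p.edges, e ∉ Fstar := fun e he => hw e (w.edges_bypass_subset he)
  obtain ⟨z, hzsupp, hzS⟩ := hsep.2.2 p
  have hzu : z ≠ u := fun h => hsep.1 (h ▸ hzS)
  have hzv : z ≠ v := fun h => hsep.2.1 (h ▸ hzS)
  have hpavz : ∀ e ∈ p.edges, e ∉ Fs z hzS := by
    intro e he hef
    exact hpav e he (Set.mem_iUnion.mpr ⟨⟨z, hzS⟩, hef⟩)
  obtain ⟨y, hysupp, hy⟩ := hFs z hzS p hpavz
  have hyu : y ≠ u := fun h => hy (by rw [h]; exact Set.mem_union_right _ (by simp))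
  have hyv : y ≠ v := fun h => hy (by rw [h]; exact Set.mem_union_right _ (by simp))
  obtain ⟨w', hw'u, hw'v⟩ := segment_exists p hp hzsupp hzu hzv hysupp hyu hyv
  exact hy (Set.mem_union_left _ ⟨w', hw'u, hw'v⟩)

lemma sym2_mem_finite (f : Sym2 V) : {o : V | o ∈ f}.Finite := by
  induction f using Sym2.ind with
  | _ x y =>
    have : {o : V | o ∈ s(x, y)} = {x, y} := by
      ext z; simp [Sym2.mem_iff]
    rw [this]
    exact (Set.finite_singleton y).insert x

/-- The key quotient lemma: contracting a finite `X` inside `K ∪ X`, where `K` only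
meets the rest of `M` through `X`, preserves infinite edge-connectivity provided the
ambient graph is infinitely edge-connected within `M`. -/
lemma quotient_infconn {G : SimpleGraph V} (M X K : Set V)
    (hXM : X ⊆ M) (hKM : K ⊆ M) (hKX : ∀ z ∈ K, z ∉ X) (hXfin : X.Finite)
    (x₀ : V) (hx₀ : x₀ ∈ X) (k₀ : V) (hk₀ : k₀ ∈ K)
    (hO : ∀ c ∈ K, ∀ d ∈ M, G.Adj c d → d ∈ K ∪ X)
    (hconn : ∀ a ∈ M, ∀ b ∈ M, ∀ F : Set (Sym2 V), F.Finite →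
      ∃ w : G.Walk a b, (∀ e ∈ w.edges, e ∉ F) ∧ ∀ z ∈ w.support, z ∈ M) :
    InfEdgeConnected (contractIn G (K ∪ X) X) := by
  classical
  set Q := contractIn G (K ∪ X) X with hQ
  have hmem : ∀ {z : V}, z ∈ K → z ∈ (K ∪ X) \ X := fun hz => ⟨Or.inl hz, hKX _ hz⟩
  have hmem' : ∀ c : ↥((K ∪ X) \ X), c.1 ∈ K := fun c => c.2.1.resolve_right c.2.2
  set π : V → Option ↥((K ∪ X) \ X) :=
    fun z => if hz : z ∈ K then some ⟨z, hmem hz⟩ else none with hπ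
  have hπK : ∀ {z : V} (hz : z ∈ K), π z = some ⟨z, hmem hz⟩ := by
    intro z hz; simp only [hπ, dif_pos hz]
  have hπn : ∀ {z : V}, z ∉ K → π z = none := by
    intro z hz; simp only [hπ, dif_neg hz]
  constructor
  · exact ⟨some ⟨k₀, hmem hk₀⟩, none, by simp⟩
  rintro p q hpq ⟨F, hFfin, hEsep⟩
  set ρ : Option ↥((K ∪ X) \ X) → V := fun o => o.elim x₀ Subtype.val with hρ
  have hρM : ∀ o, ρ o ∈ M := by
    rintro (_ | c)
    · exact hXM hx₀
    · exact hKM (hmem' c)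
  have hπρ : ∀ o, π (ρ o) = o := by
    rintro (_ | c)
    · exact hπn (fun h => hKX x₀ h hx₀)
    · rw [show ρ (some c) = c.1 from rfl, hπK (hmem' c)]
  set D : Set V := ρ '' {o | ∃ f ∈ F, o ∈ f} with hD
  have hDfin : D.Finite := by
    refine Set.Finite.image _ ?_
    have : {o : Option ↥((K ∪ X) \ X) | ∃ f ∈ F, o ∈ f} = ⋃ f ∈ F, {o | o ∈ f} := by
      ext o; simp
    rw [this]
    exact Set.Finite.biUnion hFfin (fun f _ => sym2_mem_finite f)
  set VF : Set V := X ∪ D with hVF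
  have hVFfin : VF.Finite := hXfin.union hDfin
  set Fhat : Set (Sym2 V) :=
    {e | Sym2.map π e ∈ F} ∩ Set.image2 (fun a b => s(a, b)) VF VF with hFhat
  have hFhatfin : Fhat.Finite :=
    Set.Finite.subset (Set.Finite.image2 _ hVFfin hVFfin) Set.inter_subset_right
  obtain ⟨w, hwF, hwM⟩ := hconn (ρ p) (hρM p) (ρ q) (hρM q) Fhat hFhatfin
  have hf : ∀ ⦃x y : V⦄, G.Adj x y → s(x, y) ∈ w.edges → π x = π y ∨ Q.Adj (π x) (π y) := by
    intro x y hxy he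
    have hxM : x ∈ M := hwM x (w.fst_mem_support_of_mem_edges he)
    have hyM : y ∈ M := hwM y (w.snd_mem_support_of_mem_edges he)
    by_cases hx : x ∈ K <;> by_cases hy : y ∈ K
    · right; rw [hπK hx, hπK hy]; exact hxy
    · have hyX : y ∈ X := ((hO x hx y hyM hxy).resolve_left hy)
      right; rw [hπK hx, hπn hy]
      exact ⟨y, ⟨Or.inr hyX, hyX⟩, hxy⟩
    · have hxX : x ∈ X := ((hO y hy x hxM hxy.symm).resolve_left hx)
      right; rw [hπn hx, hπK hy]
      exact ⟨x, ⟨Or.inr hxX, hxX⟩, hxy⟩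
    · left; rw [hπn hx, hπn hy]
  obtain ⟨w', hw'⟩ := walk_push π w hf
  set w'' : Q.Walk p q := (w'.copy (hπρ p) (hπρ q)) with hw''
  obtain ⟨e', he'mem, he'F⟩ := hEsep w''
  rw [hw'', Walk.edges_copy] at he'mem
  obtain ⟨x, y, hxye, hxyadj, rfl⟩ := hw' e' he'mem
  refine hwF _ hxye ⟨?_, ?_⟩
  · show Sym2.map π s(x, y) ∈ F
    rw [Sym2.map_pair_eq]; exact he'F
  · have hQadj : Q.Adj (π x) (π y) := (mem_edgeSet Q).mp (w'.edges_subset_edgeSet he'mem)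
    have hend : ∀ z t : V, G.Adj z t → z ∈ M → Q.Adj (π z) (π t) → s(π z, π t) ∈ F →
        z ∈ VF := by
      intro z t hzt hzM hQzt hFzt
      by_cases hz : z ∈ K
      · refine Or.inr ⟨π z, ⟨s(π z, π t), hFzt, Sym2.mem_mk_left _ _⟩, ?_⟩
        rw [hπK hz]; rfl
      · by_cases ht : t ∈ K
        · exact Or.inl ((hO t ht z hzM hzt.symm).resolve_left hz)
        · rw [hπn hz, hπn ht] at hQzt
          exact absurd hQzt (by intro h; exact h)
    have hxVF : x ∈ VF := hend x y hxyadj (hwM x (w.fst_mem_support_of_mem_edges hxye))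
      hQadj he'F
    have hyVF : y ∈ VF := hend y x hxyadj.symm (hwM y (w.snd_mem_support_of_mem_edges hxye))
      hQadj.symm (by rw [Sym2.eq_swap]; exact he'F)
    exact ⟨x, hxVF, y, hyVF, rfl⟩

end L63

/-- **Lemma 6.3.** If `G` is infinitely edge-connected and `u ≠ v` are separated in `G`
by a finite vertex set, then there are induced subgraphs `H_u, H_v ⊆ G` (given by their
vertex sets `Uu`, `Uv`) containing `u` and `v` respectively such that `X := Uu ∩ Uv` is
finite, nonempty and connected in `G`, both `H_u/X` and `H_v/X` are infinitely
edge-connected, `X` avoids `u` and `v`, and `uX` resp. `vX` are edges of `H_u/X`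
resp. `H_v/X`. -/
theorem exists_contraction_edges_pair {V : Type u} (G : SimpleGraph V)
    (hG : InfEdgeConnected G) (u v : V) (huv : u ≠ v)
    (S : Set V) (hS : S.Finite) (hsep : VSeparates G S u v) :
    ∃ (Uu Uv : Set V), u ∈ Uu ∧ v ∈ Uv ∧
      (Uu ∩ Uv).Finite ∧ (Uu ∩ Uv).Nonempty ∧ (G.induce (Uu ∩ Uv)).Connected ∧
      InfEdgeConnected (contractIn G Uu (Uu ∩ Uv)) ∧
      InfEdgeConnected (contractIn G Uv (Uu ∩ Uv)) ∧
      u ∉ Uu ∩ Uv ∧ v ∉ Uu ∩ Uv ∧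
      ∃ (hu' : u ∈ Uu \ (Uu ∩ Uv)) (hv' : v ∈ Uv \ (Uu ∩ Uv)),
        (contractIn G Uu (Uu ∩ Uv)).Adj (some ⟨u, hu'⟩) none ∧
        (contractIn G Uv (Uu ∩ Uv)).Adj (some ⟨v, hv'⟩) none := by

  classical
  obtain ⟨s₀, hs₀S, hstar⟩ := L63.exists_good_channel hG huv hS hsep
  set C : Set V := L63.CR G u v s₀ with hCdef
  set M : Set V := C ∪ {u, v} with hMdef
  have huM : u ∈ M := Or.inr (by simp)
  have hvM : v ∈ M := Or.inr (by simp)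
  have hCu : u ∉ C := fun h => (L63.CR_avoid h).1 rfl
  have hCv : v ∉ C := fun h => (L63.CR_avoid h).2 rfl
  have hnadj : ¬ G.Adj u v := by
    intro h
    obtain ⟨z, hz, hzS⟩ := hsep.2.2 (Walk.cons h Walk.nil)
    rw [Walk.support_cons, Walk.support_nil] at hz
    rcases List.mem_cons.mp hz with rfl | hz
    · exact hsep.1 hzS
    · rw [List.mem_singleton] at hz
      exact hsep.2.1 (hz ▸ hzS)
  have hmem_uv : ∀ {z : V}, z ∈ M → z ∉ C → z = u ∨ z = v := by
    intro z hzM hzC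
    rcases hzM with h | h
    · exact absurd h hzC
    · simpa using h
  -- first steps of confined u–v walks give neighbours of u and v in C
  have first_step : ∀ {a b : V} (w : G.Walk a b), (∀ z ∈ w.support, z ∈ M) → a ≠ b →
      ∃ c, G.Adj a c ∧ c ∈ M := by
    intro a b w hw hab
    cases w with
    | nil => exact absurd rfl hab
    | @cons a c b h p =>
      exact ⟨c, h, hw c (by rw [Walk.support_cons]; exact List.mem_cons_of_mem _ p.start_mem_support)⟩
  obtain ⟨w0, -, hw0⟩ := hstar ∅ Set.finite_empty
  have hxu : ∃ x ∈ C, G.Adj u x := by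
    obtain ⟨c, hadj, hcM⟩ := first_step w0 hw0 huv
    by_cases hcC : c ∈ C
    · exact ⟨c, hcC, hadj⟩
    · rcases hmem_uv hcM hcC with rfl | rfl
      · exact absurd rfl hadj.ne'
      · exact absurd hadj hnadj
  have hxv : ∃ x ∈ C, G.Adj v x := by
    have hw0r : ∀ z ∈ w0.reverse.support, z ∈ M := by
      intro z hz; rw [Walk.support_reverse, List.mem_reverse] at hz; exact hw0 z hz
    obtain ⟨c, hadj, hcM⟩ := first_step w0.reverse hw0r huv.symm
    by_cases hcC : c ∈ C
    · exact ⟨c, hcC, hadj⟩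
    · rcases hmem_uv hcM hcC with rfl | rfl
      · exact absurd hadj.symm hnadj
      · exact absurd rfl hadj.ne'
  obtain ⟨xu, hxuC, hadjxu⟩ := hxu
  obtain ⟨xv, hxvC, hadjxv⟩ := hxv
  -- first-exit lemma
  have firstExit : ∀ {a b : V} (w : G.Walk a b), a ∈ C →
      ∀ F : Set (Sym2 V), (∀ e ∈ w.edges, e ∉ F) →
      (∀ z ∈ w.support, z ∈ C) ∨
        ∃ t, (t = u ∨ t = v) ∧ ∃ q : G.Walk a t, (∀ e ∈ q.edges, e ∉ F) ∧
          ∀ z ∈ q.support, z ∈ M := by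
    intro a b w
    induction w with
    | nil =>
      intro ha F _
      left; intro z hz
      rw [Walk.support_nil, List.mem_singleton] at hz
      exact hz ▸ ha
    | @cons a c b h p ih =>
      intro ha F hav
      have hedge : s(a, c) ∉ F := hav _ (by rw [Walk.edges_cons]; exact List.mem_cons_self)
      have hav' : ∀ e ∈ p.edges, e ∉ F := fun e he =>
        hav e (by rw [Walk.edges_cons]; exact List.mem_cons_of_mem _ he)
      by_cases hcC : c ∈ C
      · rcases ih hcC F hav' with hall | hexit
        · left; intro z hz
          rw [Walk.support_cons] at hz
          rcases List.mem_cons.mp hz with rfl | hz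
          · exact ha
          · exact hall z hz
        · obtain ⟨t, ht, q, hqF, hqM⟩ := hexit
          refine Or.inr ⟨t, ht, Walk.cons h q, ?_, ?_⟩
          · intro e he
            rw [Walk.edges_cons] at he
            rcases List.mem_cons.mp he with rfl | he
            · exact hedge
            · exact hqF e he
          · intro z hz
            rw [Walk.support_cons] at hz
            rcases List.mem_cons.mp hz with rfl | hz
            · exact Or.inl ha
            · exact hqM z hz
      · have ht : c = u ∨ c = v := by
          by_contra hcon
          push_neg at hcon
          exact hcC (L63.CR_closure ha h hcon.1 hcon.2)
        refine Or.inr ⟨c, ht, Walk.cons h Walk.nil, ?_, ?_⟩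
        · intro e he
          rw [Walk.edges_cons] at he
          rcases List.mem_cons.mp he with rfl | he
          · exact hedge
          · simp at he
        · intro z hz
          rw [Walk.support_cons, Walk.support_nil] at hz
          rcases List.mem_cons.mp hz with rfl | hz
          · exact Or.inl ha
          · rw [List.mem_singleton] at hz
            subst hz
            rcases ht with rfl | rfl
            · exact huM
            · exact hvM
  have toEnd : ∀ a ∈ M, ∀ F : Set (Sym2 V), F.Finite →
      ∃ t, (t = u ∨ t = v) ∧ ∃ q : G.Walk a t, (∀ e ∈ q.edges, e ∉ F) ∧
        ∀ z ∈ q.support, z ∈ M := by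
    intro a ha F hF
    by_cases haC : a ∈ C
    · have hau : a ≠ u := fun h => hCu (h ▸ haC)
      obtain ⟨w, hw⟩ := L63.exists_walk_avoiding hG hau F hF
      rcases firstExit w haC F hw with hall | hexit
      · exact absurd (hall u w.end_mem_support) hCu
      · exact hexit
    · rcases hmem_uv ha haC with h | h
      · refine ⟨a, Or.inl h, Walk.nil, by simp, ?_⟩
        intro z hz
        rw [Walk.support_nil, List.mem_singleton] at hz
        exact hz ▸ ha
      · refine ⟨a, Or.inr h, Walk.nil, by simp, ?_⟩
        intro z hz
        rw [Walk.support_nil, List.mem_singleton] at hz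
        exact hz ▸ ha
  have conn : ∀ a ∈ M, ∀ b ∈ M, ∀ F : Set (Sym2 V), F.Finite →
      ∃ w : G.Walk a b, (∀ e ∈ w.edges, e ∉ F) ∧ ∀ z ∈ w.support, z ∈ M := by
    intro a ha b hb F hF
    obtain ⟨ta, hta, qa, hqaF, hqaM⟩ := toEnd a ha F hF
    obtain ⟨tb, htb, qb, hqbF, hqbM⟩ := toEnd b hb F hF
    obtain ⟨β, hβF, hβM⟩ := hstar F hF
    have hγ : ∃ γ : G.Walk ta tb, (∀ e ∈ γ.edges, e ∉ F) ∧ ∀ z ∈ γ.support, z ∈ M := by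
      have hnilu : ∃ γ : G.Walk u u, (∀ e ∈ γ.edges, e ∉ F) ∧ ∀ z ∈ γ.support, z ∈ M := by
        refine ⟨Walk.nil, by simp, ?_⟩
        intro z hz; rw [Walk.support_nil, List.mem_singleton] at hz; exact hz ▸ huM
      have hnilv : ∃ γ : G.Walk v v, (∀ e ∈ γ.edges, e ∉ F) ∧ ∀ z ∈ γ.support, z ∈ M := by
        refine ⟨Walk.nil, by simp, ?_⟩
        intro z hz; rw [Walk.support_nil, List.mem_singleton] at hz; exact hz ▸ hvM
      rcases hta with rfl | rfl <;> rcases htb with rfl | rfl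
      · exact hnilu
      · exact ⟨β, hβF, hβM⟩
      · refine ⟨β.reverse, ?_, ?_⟩
        · intro e he; rw [Walk.edges_reverse, List.mem_reverse] at he; exact hβF e he
        · intro z hz; rw [Walk.support_reverse, List.mem_reverse] at hz; exact hβM z hz
      · exact hnilv
    obtain ⟨γ, hγF, hγM⟩ := hγ
    refine ⟨qa.append (γ.append qb.reverse), ?_, ?_⟩
    · intro e he
      rw [Walk.edges_append, Walk.edges_append] at he
      rcases List.mem_append.mp he with he | he
      · exact hqaF e he
      · rcases List.mem_append.mp he with he | he
        · exact hγF e he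
        · rw [Walk.edges_reverse, List.mem_reverse] at he
          exact hqbF e he
    · intro z hz
      rw [Walk.mem_support_append_iff] at hz
      rcases hz with hz | hz
      · exact hqaM z hz
      · rw [Walk.mem_support_append_iff] at hz
        rcases hz with hz | hz
        · exact hγM z hz
        · rw [Walk.support_reverse, List.mem_reverse] at hz
          exact hqbM z hz
  -- construction of X
  set T : Set V := insert xu (insert xv (S ∩ C)) with hTdef
  have hTfin : T.Finite := (((hS.inter_of_left C)).insert xv).insert xu
  have hTC : T ⊆ C := by
    intro t ht
    rcases Set.mem_insert_iff.mp ht with rfl | ht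
    · exact hxuC
    · rcases Set.mem_insert_iff.mp ht with rfl | ht
      · exact hxvC
      · exact ht.2
  have hwalks : ∀ t (_ : t ∈ T), ∃ w : G.Walk s₀ t, u ∉ w.support ∧ v ∉ w.support :=
    fun t ht => hTC ht
  choose wX hwXu hwXv using hwalks
  haveI : Finite ↥T := hTfin.to_subtype
  set X : Set V := ⋃ (t : ↥T), {z | z ∈ (wX t.1 t.2).support} with hXdef
  have hXfin : X.Finite := Set.finite_iUnion (fun t => (wX t.1 t.2).support.finite_toSet)
  have hXmem : ∀ {t : V} (ht : t ∈ T) {z : V}, z ∈ (wX t ht).support → z ∈ X := by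
    intro t ht z hz
    exact Set.mem_iUnion.mpr ⟨⟨t, ht⟩, hz⟩
  have hXC : X ⊆ C := by
    intro z hz
    obtain ⟨t, hzt⟩ := Set.mem_iUnion.mp hz
    exact L63.CR_of_walk (wX t.1 t.2) (hwXu _ _) (hwXv _ _) hzt
  have hXM : X ⊆ M := fun z hz => Or.inl (hXC hz)
  have hTX : ∀ t (ht : t ∈ T), t ∈ X := fun t ht => hXmem ht (wX t ht).end_mem_support
  have hs₀X : s₀ ∈ X :=
    hXmem (Set.mem_insert xu _) (wX xu (Set.mem_insert xu _)).start_mem_support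
  have hxuX : xu ∈ X := hTX xu (Set.mem_insert _ _)
  have hxvX : xv ∈ X := hTX xv (Set.mem_insert_of_mem _ (Set.mem_insert _ _))
  have hSCX : ∀ z, z ∈ S → z ∈ C → z ∈ X := fun z h1 h2 =>
    hTX z (Set.mem_insert_of_mem _ (Set.mem_insert_of_mem _ ⟨h1, h2⟩))
  have huX : u ∉ X := fun h => hCu (hXC h)
  have hvX : v ∉ X := fun h => hCv (hXC h)
  have hXconn : (G.induce X).Connected := by
    rw [connected_iff]
    refine ⟨?_, ⟨⟨s₀, hs₀X⟩⟩⟩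
    have key : ∀ z (hz : z ∈ X), (G.induce X).Reachable ⟨s₀, hs₀X⟩ ⟨z, hz⟩ := by
      intro z hz
      obtain ⟨t, hzt⟩ := Set.mem_iUnion.mp hz
      have hsub : ∀ y ∈ ((wX t.1 t.2).takeUntil z hzt).support, y ∈ X := fun y hy =>
        hXmem t.2 (Walk.support_takeUntil_subset _ hzt hy)
      exact L63.induced_reachable _ hsub hs₀X hz
    rintro ⟨zp, hp⟩ ⟨zq, hq⟩
    exact (key zp hp).symm.trans (key zq hq)
  -- the side of u
  set A : Set V := {c | ∃ w : G.Walk u c, (∀ z ∈ w.support, z ∈ M) ∧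
    ∀ z ∈ w.support, z ∉ X} with hAdef
  have huA : u ∈ A := by
    refine ⟨Walk.nil, ?_, ?_⟩ <;>
      · intro z hz; rw [Walk.support_nil, List.mem_singleton] at hz; subst hz
        first | exact huM | exact huX
  have hAM : A ⊆ M := by
    rintro c ⟨w, h1, -⟩; exact h1 c w.end_mem_support
  have hAX : ∀ c ∈ A, c ∉ X := by
    rintro c ⟨w, -, h2⟩; exact h2 c w.end_mem_support
  have hAcl : ∀ c ∈ A, ∀ d, G.Adj c d → d ∈ M → d ∉ X → d ∈ A := by
    rintro c ⟨w, h1, h2⟩ d hcd hdM hdX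
    refine ⟨w.concat hcd, ?_, ?_⟩ <;>
      · intro z hz; rw [Walk.support_concat] at hz
        rcases List.mem_append.mp hz with hz | hz
        · first | exact h1 z hz | exact h2 z hz
        · rw [List.mem_singleton] at hz; subst hz
          first | exact hdM | exact hdX
  have hvA : v ∉ A := by
    rintro ⟨w, h1, h2⟩
    obtain ⟨z, hz, hzS⟩ := hsep.2.2 w
    have hzM := h1 z hz
    have hzu : z ≠ u := fun h => hsep.1 (h ▸ hzS)
    have hzv : z ≠ v := fun h => hsep.2.1 (h ▸ hzS)
    have hzC : z ∈ C := by
      by_contra hcon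
      rcases hmem_uv hzM hcon with rfl | rfl
      · exact hzu rfl
      · exact hzv rfl
    exact h2 z hz (hSCX z hzS hzC)
  set Kv : Set V := M \ (A ∪ X) with hKvdef
  have hKvM : Kv ⊆ M := fun z hz => hz.1
  have hKvX : ∀ z ∈ Kv, z ∉ X := fun z hz h => hz.2 (Or.inr h)
  have hvKv : v ∈ Kv := ⟨hvM, fun h => h.elim hvA hvX⟩
  have hO_A : ∀ c ∈ A, ∀ d ∈ M, G.Adj c d → d ∈ A ∪ X := by
    intro c hc d hd hcd
    by_cases hdX : d ∈ X
    · exact Or.inr hdX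
    · exact Or.inl (hAcl c hc d hcd hd hdX)
  have hO_Kv : ∀ c ∈ Kv, ∀ d ∈ M, G.Adj c d → d ∈ Kv ∪ X := by
    intro c hc d hd hcd
    by_cases hdX : d ∈ X
    · exact Or.inr hdX
    · refine Or.inl ⟨hd, fun hdAX => ?_⟩
      rcases hdAX with hdA | hdX'
      · exact hc.2 (Or.inl (hAcl d hdA c hcd.symm (hKvM hc) (hKvX c hc)))
      · exact hdX hdX'
  have hUuUv : (A ∪ X) ∩ (M \ A) = X := by
    ext z
    constructor
    · rintro ⟨hz1, hz2, hz3⟩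
      rcases hz1 with hz1 | hz1
      · exact absurd hz1 hz3
      · exact hz1
    · intro hzX
      exact ⟨Or.inr hzX, hXM hzX, fun h => hAX z h hzX⟩
  have hUv2 : M \ A = Kv ∪ X := by
    ext z
    constructor
    · rintro ⟨hzM, hzA⟩
      by_cases hzX : z ∈ X
      · exact Or.inr hzX
      · exact Or.inl ⟨hzM, fun h => h.elim hzA hzX⟩
    · rintro (⟨hzM, hz⟩ | hzX)
      · exact ⟨hzM, fun h => hz (Or.inl h)⟩
      · exact ⟨hXM hzX, fun h => hAX z h hzX⟩
  refine ⟨A ∪ X, M \ A, Or.inl huA, ⟨hvM, hvA⟩, ?_, ?_, ?_, ?_, ?_, ?_, ?_, ?_⟩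
  · rw [hUuUv]; exact hXfin
  · rw [hUuUv]; exact ⟨xu, hxuX⟩
  · rw [hUuUv]; exact hXconn
  · rw [hUuUv]
    exact L63.quotient_infconn M X A hXM hAM hAX hXfin xu hxuX u huA hO_A conn
  · rw [hUuUv, hUv2]
    exact L63.quotient_infconn M X Kv hXM hKvM hKvX hXfin xv hxvX v hvKv hO_Kv conn
  · rw [hUuUv]; exact huX
  · rw [hUuUv]; exact hvX
  · rw [hUuUv, hUv2]
    refine ⟨⟨Or.inl huA, huX⟩, ⟨Or.inl hvKv, hvX⟩, ?_, ?_⟩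
    · show ∃ x ∈ (A ∪ X) ∩ X, G.Adj u x
      exact ⟨xu, ⟨Or.inr hxuX, hxuX⟩, hadjxu⟩
    · show ∃ x ∈ (Kv ∪ X) ∩ X, G.Adj v x
      exact ⟨xv, ⟨Or.inr hxvX, hxvX⟩, hadjxv⟩
end
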